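/- For each k \geq 1, the equivariant vertex weight of the unique length-k T-fixed point Q^k in the one-leg case \mu = ((1),\emptyset,\emptyset) equals w(Q^k) = \prod_{i=0}^{k-1} (i\,s_1 - s_2 - s_3) / \prod_{i=1}^{k} (-i\,s_1) = \binom{(s_2+s_3)/s_1}{k}, and hence \sum_{k\geq 0} w(Q^k) q^k = (1+q)^{(s_2+s_3)/s_1} as a formal power series in q with coefficients in Q(s_1,s_2,s_3). -/

import Mathlib

/-!
Dividing the `i`-th factor `i s₁ - s₂ - s₃` of the numerator by the matching factor `-(i+1) s₁`
of the denominator gives `((s₂+s₃)/s₁ - i)/(i+1)`, and since `k! = ∏_{i<k} (i+1)` the product of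
these factors is `binom((s₂+s₃)/s₁, k)`. This holds for every `k` (for `k = 0` both sides are `1`),
so the two generating series agree coefficientwise.
-/

noncomputable section

open MvPolynomial

/-- The field `ℚ(s₁,s₂,s₃)` of equivariant parameters. -/
abbrev K := FractionRing (MvPolynomial (Fin 3) ℚ)

/-- The equivariant parameters `s₁,s₂,s₃`. -/
def s (i : Fin 3) : K := algebraMap (MvPolynomial (Fin 3) ℚ) K (X i)

/-- The generalized binomial coefficient `binom(x,k) = x(x-1)⋯(x-k+1)/k!`. -/
def rchoose (x : K) (k : ℕ) : K :=
  (∏ i ∈ Finset.range k, (x - (i : K))) / (Nat.factorial k : K)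

/-- The localization weight `w(Q^k)` of the length-`k` fixed point. -/
def wQ (k : ℕ) : K :=
  (∏ i ∈ Finset.range k, ((i : K) * s 0 - s 1 - s 2)) /
    (∏ i ∈ Finset.range k, (-((i : K) + 1) * s 0))

open Finset Nat

section Field

variable {F : Type*} [Field F]

theorem prod_range_div_factorial (f : ℕ → F) (k : ℕ) :
    (∏ i ∈ range k, f i) / (k ! : F) = ∏ i ∈ range k, f i / ((i : F) + 1) := by
  rw [← prod_range_add_one_eq_factorial, prod_div_distrib]
  push_cast
  rfl

theorem natCast_mul_sub_div_neg_succ_mul [CharZero F] {a : F} (ha : a ≠ 0) (b : F) (i : ℕ) :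
    ((i : F) * a - b) / (-((i : F) + 1) * a) = (b / a - i) / ((i : F) + 1) := by
  have hi : (i : F) + 1 ≠ 0 := Nat.cast_add_one_ne_zero i
  field_simp
  ring

end Field

theorem s_zero_ne_zero : s 0 ≠ 0 :=
  (map_ne_zero_iff _ (IsFractionRing.injective (MvPolynomial (Fin 3) ℚ) K)).mpr (X_ne_zero 0)

theorem wQ_eq_rchoose (k : ℕ) : wQ k = rchoose ((s 1 + s 2) / s 0) k := by
  rw [wQ, rchoose, prod_range_div_factorial, ← prod_div_distrib]
  refine prod_congr rfl fun i _ => ?_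
  rw [sub_sub, natCast_mul_sub_div_neg_succ_mul s_zero_ne_zero]

theorem one_leg_vertex_weight_is_binomial :
    (∀ k : ℕ, 1 ≤ k → wQ k = rchoose ((s 1 + s 2) / s 0) k) ∧
    PowerSeries.mk wQ = PowerSeries.mk (rchoose ((s 1 + s 2) / s 0)) :=
  ⟨fun k _ => wQ_eq_rchoose k, congrArg PowerSeries.mk (funext wQ_eq_rchoose)⟩

end
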